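/- arXiv:1811.03942 — 2 statements merged into one kernel-verified Lean document; each statement's English description precedes it below -/
import Mathlib

section
/- Let (X,S) be a minimal subshift over a finite alphabet A and let x ∈ X. Then Per(x) = ℤℙ'(X,S): the set of common differences p ≥ 1 for which x has a constant arithmetic subsequence (x_{k+np})_{n∈ℤ} equals the set of positive multiples of the integers p ≥ 1 that are an essential period of some point of X for some letter cylinder [a]. -/
/-!
If `x` has a constant `p`-progression, its `p`-skeleton `K` is invariant under translation
by `p`. The stabilizer of `K` in `ℤ` is `dℤ` for some `d ∣ p`, and translating by multiples
of `d` keeps one inside `K`, so the `d`-skeleton is again `K`; hence `d` is an essential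
period and `p` is a multiple of it.

Conversely, for a closed `U` and `p ≥ 1`, having a nonempty `p`-skeleton is a closed
condition (the offset may be reduced modulo `p`, leaving a finite union of closed sets)
that is invariant under the shift. By minimality it passes from any point of `X` to `x`.
-/

/-- The `k`-th power of the shift on two-sided sequences: `(S^k x) n = x (n + k)`. -/
def shiftZ {A : Type*} (k : ℤ) (x : ℤ → A) : ℤ → A := fun n => x (n + k)

/-- The period-`p` skeleton of `z` relative to `U`:
`PS_p(z,U) = {k ∈ ℤ : S^{k+np} z ∈ U for all n ∈ ℤ}`. -/
def periodSkeleton {A : Type*} (p : ℕ) (z : ℤ → A) (U : Set (ℤ → A)) : Set ℤ :=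
  {k : ℤ | ∀ n : ℤ, shiftZ (k + n * p) z ∈ U}

/-- `p` is an essential period of `z` for `U`. -/
def IsEssentialPeriod {A : Type*} (p : ℕ) (z : ℤ → A) (U : Set (ℤ → A)) : Prop :=
  periodSkeleton p z U ≠ ∅ ∧
    ∀ q : ℤ, periodSkeleton p z U = (fun k => k - q) '' periodSkeleton p z U →
      (p : ℤ) ∣ q

open Pointwise

section PeriodSkeleton

variable {A : Type*} {p d : ℕ} {z : ℤ → A} {U : Set (ℤ → A)}

lemma shiftZ_shiftZ (s t : ℤ) (z : ℤ → A) : shiftZ s (shiftZ t z) = shiftZ (s + t) z := by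
  funext n
  simp only [shiftZ, add_assoc]

lemma continuous_shiftZ [TopologicalSpace A] (k : ℤ) :
    Continuous (shiftZ k : (ℤ → A) → ℤ → A) :=
  continuous_pi fun _ => continuous_apply _

lemma mem_periodSkeleton_cylinder {k : ℤ} {a : A} :
    k ∈ periodSkeleton p z {w | w 0 = a} ↔ ∀ n : ℤ, z (k + n * p) = a := by
  simp [periodSkeleton, shiftZ]

lemma shiftZ_mem_of_mem_periodSkeleton {k : ℤ} (hk : k ∈ periodSkeleton p z U) :
    shiftZ k z ∈ U := by
  simpa using hk 0

lemma add_mul_mem_periodSkeleton {k : ℤ} (hk : k ∈ periodSkeleton p z U) (m : ℤ) :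
    k + m * p ∈ periodSkeleton p z U := fun n => by
  simpa only [add_mul, add_assoc] using hk (m + n)

lemma mem_periodSkeleton_shiftZ {k t : ℤ} :
    k ∈ periodSkeleton p (shiftZ t z) U ↔ k + t ∈ periodSkeleton p z U := by
  simp only [periodSkeleton, Set.mem_ofPred_eq, shiftZ_shiftZ, add_right_comm k]

lemma periodSkeleton_subset_of_dvd (h : d ∣ p) :
    periodSkeleton d z U ⊆ periodSkeleton p z U := by
  obtain ⟨e, rfl⟩ := h
  intro k hk n
  convert hk (n * e) using 3
  push_cast
  ring

lemma natCast_mem_stabilizer_periodSkeleton :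
    (p : ℤ) ∈ AddAction.stabilizer ℤ (periodSkeleton p z U) := by
  refine AddAction.mem_stabilizer_set.2 fun k => ⟨fun hk => ?_, fun hk => ?_⟩
  · simpa [vadd_eq_add, add_comm] using add_mul_mem_periodSkeleton hk (-1)
  · simpa [vadd_eq_add, add_comm] using add_mul_mem_periodSkeleton hk 1

lemma periodSkeleton_eq_of_mem_stabilizer (hdp : d ∣ p)
    (hd : (d : ℤ) ∈ AddAction.stabilizer ℤ (periodSkeleton p z U)) :
    periodSkeleton d z U = periodSkeleton p z U := by
  refine (periodSkeleton_subset_of_dvd hdp).antisymm fun k hk n => ?_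
  have hnd : n * d ∈ AddAction.stabilizer ℤ (periodSkeleton p z U) := by
    simpa using AddSubgroup.zsmul_mem _ hd n
  have := (AddAction.mem_stabilizer_set.1 hnd k).2 hk
  rw [vadd_eq_add, add_comm] at this
  exact shiftZ_mem_of_mem_periodSkeleton this

lemma eq_image_sub_iff_mem_stabilizer {K : Set ℤ} {q : ℤ} :
    K = (fun k => k - q) '' K ↔ q ∈ AddAction.stabilizer ℤ K := by
  rw [← neg_mem_iff, AddAction.mem_stabilizer_iff, eq_comm, ← Set.image_vadd]
  simp only [vadd_eq_add, neg_add_eq_sub]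

theorem exists_isEssentialPeriod_dvd (hp : 0 < p) (hne : (periodSkeleton p z U).Nonempty) :
    ∃ d, 0 < d ∧ d ∣ p ∧ IsEssentialPeriod d z U := by
  set H := AddAction.stabilizer ℤ (periodSkeleton p z U)
  obtain ⟨g, hg⟩ := Int.subgroup_cyclic H
  rw [← AddSubgroup.zmultiples_eq_closure, ← Int.zmultiples_natAbs] at hg
  have hmem (q : ℤ) : q ∈ H ↔ (g.natAbs : ℤ) ∣ q := by rw [hg, Int.mem_zmultiples_iff]
  have hdp : g.natAbs ∣ p :=
    Int.natCast_dvd_natCast.1 ((hmem p).1 natCast_mem_stabilizer_periodSkeleton)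
  have hskel := periodSkeleton_eq_of_mem_stabilizer hdp ((hmem _).2 dvd_rfl)
  refine ⟨g.natAbs, Nat.pos_of_dvd_of_pos hdp hp, hdp, ?_, fun q hq => ?_⟩
  · rw [hskel]
    exact hne.ne_empty
  · rw [hskel, eq_image_sub_iff_mem_stabilizer] at hq
    exact (hmem q).1 hq

variable [TopologicalSpace A]

theorem isClosed_setOf_periodSkeleton_nonempty (hU : IsClosed U) (hp : 0 < p) :
    IsClosed {w : ℤ → A | (periodSkeleton p w U).Nonempty} := by
  have hp' : (0 : ℤ) < p := by exact_mod_cast hp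
  have hunion : {w : ℤ → A | (periodSkeleton p w U).Nonempty} =
      ⋃ r ∈ Finset.Ico (0 : ℤ) p, ⋂ n : ℤ, shiftZ (r + n * p) ⁻¹' U := by
    ext w
    simp only [Set.mem_ofPred_eq, Set.mem_iUnion, Set.mem_iInter, Set.mem_preimage,
      Finset.mem_Ico, exists_prop]
    refine ⟨fun ⟨k, hk⟩ => ?_, fun ⟨r, _, hr⟩ => ⟨r, hr⟩⟩
    have hmod : k % p ∈ periodSkeleton p w U := by
      convert add_mul_mem_periodSkeleton hk (-(k / p)) using 1
      rw [Int.emod_def]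
      ring
    exact ⟨k % p, ⟨Int.emod_nonneg k hp'.ne', Int.emod_lt_of_pos k hp'⟩, hmod⟩
  rw [hunion]
  exact isClosed_biUnion_finset fun r _ =>
    isClosed_iInter fun n => hU.preimage (continuous_shiftZ (r + n * p))

theorem periodSkeleton_nonempty_of_mem_orbit_closure (hU : IsClosed U) (hp : 0 < p)
    (hz : (periodSkeleton p z U).Nonempty) {x : ℤ → A}
    (hx : x ∈ closure {w | ∃ k : ℤ, w = shiftZ k z}) :
    (periodSkeleton p x U).Nonempty := by
  refine closure_minimal ?_ (isClosed_setOf_periodSkeleton_nonempty hU hp) hx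
  rintro _ ⟨t, rfl⟩
  obtain ⟨k, hk⟩ := hz
  exact ⟨k - t, mem_periodSkeleton_shiftZ.2 (by simpa using hk)⟩

end PeriodSkeleton

theorem per_eq_multiples_of_essential_periods_general
    {A : Type*} [TopologicalSpace A] [DiscreteTopology A]
    (X : Set (ℤ → A))
    (hmin : ∀ x ∈ X, X ⊆ closure {z | ∃ k : ℤ, z = shiftZ k x})
    (x : ℤ → A) (hx : x ∈ X) :
    {p : ℕ | 1 ≤ p ∧ ∃ (a : A) (k : ℤ), ∀ n : ℤ, x (k + n * p) = a} =
      {m : ℕ | 1 ≤ m ∧ ∃ p : ℕ, 1 ≤ p ∧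
        (∃ z ∈ X, ∃ a : A, IsEssentialPeriod p z {w : ℤ → A | w 0 = a}) ∧ p ∣ m} := by
  ext m
  constructor
  · rintro ⟨hm, a, k, hk⟩
    obtain ⟨d, hd, hdm, hess⟩ :=
      exists_isEssentialPeriod_dvd hm ⟨k, mem_periodSkeleton_cylinder.2 hk⟩
    exact ⟨hm, d, hd, ⟨x, hx, a, hess⟩, hdm⟩
  · rintro ⟨hm, p, hp, ⟨z, hz, a, hess⟩, hpm⟩
    have hcyl : IsClosed {w : ℤ → A | w 0 = a} :=
      isClosed_singleton.preimage (continuous_apply 0)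
    obtain ⟨k, hk⟩ := periodSkeleton_nonempty_of_mem_orbit_closure hcyl hp
      (Set.nonempty_iff_ne_empty.2 hess.1) (hmin z hz hx)
    exact ⟨hm, a, k, mem_periodSkeleton_cylinder.1 (periodSkeleton_subset_of_dvd hpm hk)⟩

/-- Let `(X,S)` be a minimal subshift over a finite alphabet `A` and `x ∈ X`. Then
`Per(x) = ℤℙ'(X,S)`: the set of common differences `p ≥ 1` of constant arithmetic
subsequences of `x` equals the set of positive multiples of the integers `p ≥ 1` that
are an essential period of some point of `X` for some letter cylinder `[a]`. -/
theorem per_eq_multiples_of_essential_periods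
    {A : Type*} [Fintype A] [TopologicalSpace A] [DiscreteTopology A]
    (X : Set (ℤ → A)) (hXne : X.Nonempty) (hXclosed : IsClosed X)
    (hXinv : ∀ x ∈ X, shiftZ 1 x ∈ X) (hXinv' : ∀ x ∈ X, shiftZ (-1) x ∈ X)
    (hmin : ∀ x ∈ X, X ⊆ closure {z | ∃ k : ℤ, z = shiftZ k x})
    (x : ℤ → A) (hx : x ∈ X) :
    {p : ℕ | 1 ≤ p ∧ ∃ (a : A) (k : ℤ), ∀ n : ℤ, x (k + n * p) = a} =
      {m : ℕ | 1 ≤ m ∧ ∃ p : ℕ, 1 ≤ p ∧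
        (∃ z ∈ X, ∃ a : A, IsEssentialPeriod p z {w : ℤ → A | w 0 = a}) ∧ p ∣ m} :=
  per_eq_multiples_of_essential_periods_general X hmin x hx
end

section
/- Let y be a sturmian sequence and let z be a Toeplitz sequence. Then L(y) ∩ L(z) is finite; that is, y and z have only finitely many factors in common. -/
/-- The word `w` is a (finite) factor of the two-sided sequence `u`. -/
def IsFactor {B : Type*} (w : List B) (u : ℤ → B) : Prop :=
  ∃ i : ℤ, ∀ t : Fin w.length, u (i + t) = w.get t

/-- `x` is uniformly recurrent. -/
def UniformlyRecurrent {B : Type*} (x : ℤ → B) : Prop :=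
  ∀ (m : ℕ) (i : ℤ), ∃ B' : ℕ, ∀ k : ℤ, ∃ j : ℤ, k ≤ j ∧ j ≤ k + B' ∧
    ∀ t : Fin m, x (j + t) = x (i + t)

/-- The complexity function of `x`. -/
noncomputable def complexity {B : Type*} (x : ℤ → B) (n : ℕ) : ℕ :=
  Nat.card {w : Fin n → B | ∃ i : ℤ, ∀ j : Fin n, w j = x (i + j)}

/-- `x` is sturmian: uniformly recurrent with complexity `n + 1`. -/
def IsSturmian {B : Type*} (x : ℤ → B) : Prop :=
  UniformlyRecurrent x ∧ ∀ n : ℕ, complexity x n = n + 1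

/-- `x` is a Toeplitz sequence. -/
def IsToeplitz {B : Type*} (x : ℤ → B) : Prop :=
  ∀ k : ℤ, ∃ p : ℕ, 1 < p ∧ ∀ n : ℤ, x (k + n * p) = x k

/-!
If `y` and `z` had infinitely many common factors, they would have arbitrarily long ones. Let
`p > 1` be a period of `z` at `0`, so `z = a := z 0` on `pℤ`. Recentering long common factors at
multiples of `p` and taking a pointwise cluster point yields a sequence `x` whose factors are
factors of `y` (so, `y` being uniformly recurrent, `x` has complexity `n + 1`) and with `x = a` on
`pℤ`.

No such `x` exists. Read in blocks of length `p`, `x` is aperiodic, so by Morse–Hedlund it has at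
least `K + 1` block factors of length `K`. Hence the numbers of factors of length
`n = (m + 1) p - 1` occurring at each residue mod `p` add up to at least `n + 2`, one more than
the complexity, so some factor occurs at two residues `r ≠ s`, and on that occurrence `x = a`
also on the residues `A + (r - s)`, where `A` is the current set of residues carrying `a`. Another
cluster point enlarges `A`, unless `A` is stable under `+ (r - s)`; then `A` contains the multiples
of `g = gcd (r - s, p) < p` and we restart with modulus `g`. Modulus `1` makes `x` constant.
-/

open Function Set Filter

section

variable {α : Type*}

def window (u : ℤ → α) (m : ℕ) (i : ℤ) : Fin m → α := fun t => u (i + t)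

def factorSet (u : ℤ → α) (m : ℕ) : Set (Fin m → α) := range (window u m)

lemma complexity_eq_ncard_factorSet (u : ℤ → α) (n : ℕ) :
    complexity u n = (factorSet u n).ncard := by
  have : {w : Fin n → α | ∃ i : ℤ, ∀ j : Fin n, w j = u (i + j)} = factorSet u n := by
    ext w
    simp [factorSet, window, funext_iff, eq_comm]
  rw [complexity, this, Nat.card_coe_set_eq]

lemma apply_eq_of_window_eq {x y : ℤ → α} {n : ℕ} {i j : ℤ} (h : window x n i = window y n j)
    {q : ℤ} (hq0 : 0 ≤ q) (hqn : q < n) : x (i + q) = y (j + q) := by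
  simpa [window, Int.toNat_of_nonneg hq0] using congrFun h ⟨q.toNat, by omega⟩

lemma ncard_range_le_of_factorsThrough {ι β γ : Type*} [Finite γ] {f : ι → β} {g : ι → γ}
    (h : FactorsThrough f g) : (range f).ncard ≤ (range g).ncard := by
  rw [← Nat.card_coe_set_eq, ← Nat.card_coe_set_eq]
  refine Nat.card_le_card_of_injective (fun b => ⟨g (rangeSplitting f b), mem_range_self _⟩) ?_
  intro b b' hbb'
  apply Subtype.ext
  rw [← apply_rangeSplitting f b, ← apply_rangeSplitting f b']
  exact h (congrArg Subtype.val hbb')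

lemma injOn_of_image_eq_of_ncard_le {β γ : Type*} [Finite β] {f : β → γ} {s : Set β}
    {t : Set γ} (hst : f '' s = t) (h : s.ncard ≤ t.ncard) : InjOn f s :=
  (ncard_image_iff (toFinite s)).mp (le_antisymm (ncard_image_le (toFinite s)) (hst ▸ h))

lemma ncard_factorSet_le_of_periodic [Finite α] {u : ℤ → α} {N : ℕ} (hu : Periodic u N)
    (hN : 0 < N) (m : ℕ) : (factorSet u m).ncard ≤ N := by
  have hw : Periodic (window u m) N := fun i => funext fun t => by
    simp only [window]
    rw [add_right_comm, hu]
  calc (factorSet u m).ncard ≤ (window u m '' Ico 0 N).ncard := by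
        refine ncard_le_ncard ?_ (toFinite _)
        rintro _ ⟨i, rfl⟩
        obtain ⟨j, hj, hij⟩ := hw.exists_mem_Ico₀ (by exact_mod_cast hN) i
        exact ⟨j, hj, hij.symm⟩
    _ ≤ N := by
        refine (ncard_image_le (finite_Ico _ _)).trans ?_
        rw [← Finset.coe_Ico, ncard_coe_finset, Int.card_Ico, sub_zero, Int.toNat_natCast]

lemma init_window (u : ℤ → α) (m : ℕ) (i : ℤ) :
    Fin.init (window u (m + 1) i) = window u m i := rfl

lemma tail_window (u : ℤ → α) (m : ℕ) (i : ℤ) :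
    Fin.tail (window u (m + 1) i) = window u m (i + 1) := by
  ext t
  simp only [Fin.tail, window, Fin.val_succ]
  push_cast
  ring_nf

/-- Morse–Hedlund. Equality of the two complexities makes both restrictions
`Fin.init, Fin.tail : factorSet u (m + 1) → factorSet u m` injective, so a window of length
`m + 1` determines its two neighbours, and a repeated window repeats forever in both
directions. -/
lemma exists_periodic_of_ncard_factorSet_succ_le [Finite α] {u : ℤ → α} {m : ℕ}
    (h : (factorSet u (m + 1)).ncard ≤ (factorSet u m).ncard) :
    ∃ N : ℕ, 0 < N ∧ Periodic u N := by
  have hinit : InjOn Fin.init (factorSet u (m + 1)) :=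
    injOn_of_image_eq_of_ncard_le (by rw [factorSet, ← range_comp]; rfl) h
  have htail : InjOn Fin.tail (factorSet u (m + 1)) := by
    refine injOn_of_image_eq_of_ncard_le ?_ h
    have hshift : Fin.tail ∘ window u (m + 1) = window u m ∘ Equiv.addRight (1 : ℤ) :=
      funext (tail_window u m)
    rw [factorSet, ← range_comp, hshift, (Equiv.addRight (1 : ℤ)).surjective.range_comp]
    rfl
  have step : ∀ i j, window u (m + 1) i = window u (m + 1) j ↔
      window u (m + 1) (i + 1) = window u (m + 1) (j + 1) := fun i j => by
    constructor
    · intro hij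
      refine hinit (mem_range_self _) (mem_range_self _) ?_
      rw [init_window, init_window, ← tail_window, ← tail_window, hij]
    · intro hij
      refine htail (mem_range_self _) (mem_range_self _) ?_
      rw [tail_window, tail_window, ← init_window u m (i + 1), ← init_window u m (j + 1), hij]
  obtain ⟨a, c, hac, hW⟩ := Finite.exists_ne_map_eq_of_infinite fun n : ℕ => window u (m + 1) n
  wlog hlt : a < c generalizing a c
  · exact this c a hac.symm hW.symm (by omega)
  have hper : ∀ i, window u (m + 1) i = window u (m + 1) (i + (c - a : ℕ)) := fun i => by
    refine Int.inductionOn' i a ?_ ?_ ?_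
    · simpa [Nat.cast_sub hlt.le] using hW
    · intro k _ ih
      rwa [add_right_comm, ← step]
    · intro k _ ih
      rwa [step, sub_add_cancel, add_right_comm, sub_add_cancel]
  refine ⟨c - a, by omega, fun i => ?_⟩
  simpa [window] using (congrFun (hper i) 0).symm

lemma succ_le_ncard_factorSet_of_aperiodic [Finite α] {u : ℤ → α}
    (hu : ∀ N : ℕ, 0 < N → ¬ Periodic u N) (m : ℕ) : m + 1 ≤ (factorSet u m).ncard := by
  induction m with
  | zero => exact (ncard_pos (toFinite _)).mpr (range_nonempty _)
  | succ m ih =>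
    by_contra! hlt
    obtain ⟨N, hN, hper⟩ :=
      exists_periodic_of_ncard_factorSet_succ_le (u := u) (m := m) (by omega)
    exact hu N hN hper

lemma not_periodic_of_ncard_factorSet_eq [Finite α] {x : ℤ → α}
    (hx : ∀ n, (factorSet x n).ncard = n + 1) {N : ℕ} (hN : 0 < N) : ¬ Periodic x N := by
  intro hper
  have := ncard_factorSet_le_of_periodic hper hN N
  rw [hx] at this
  omega

lemma factorSet_eq_of_subset_of_uniformlyRecurrent {x y : ℤ → α} (hy : UniformlyRecurrent y)
    (hxy : ∀ m, factorSet x m ⊆ factorSet y m) (m : ℕ) : factorSet x m = factorSet y m := by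
  refine (hxy m).antisymm ?_
  rintro _ ⟨i, rfl⟩
  obtain ⟨R, hR⟩ := hy m i
  obtain ⟨i', hi'⟩ := hxy (m + R) (mem_range_self 0)
  obtain ⟨j, hij, hjR, hj⟩ := hR i'
  refine ⟨j - i', funext fun t => ?_⟩
  have := apply_eq_of_window_eq hi' (q := j - i' + t) (by omega) (by push_cast; omega)
  rw [← add_assoc, add_sub_cancel] at this
  simpa [window] using this.symm.trans (hj t)

lemma exists_frequently_eqOn_finset {ι β : Type*} [Finite β] (f : ℕ → ι → β) :
    ∃ g : ι → β, ∀ s : Finset ι, ∃ᶠ n in atTop, ∀ t ∈ s, f n t = g t := by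
  let U := Ultrafilter.of (atTop : Filter ℕ)
  have hlim : ∀ t, ∃ b, ∀ᶠ n in (U : Filter ℕ), f n t = b := fun t =>
    Ultrafilter.eventually_exists_iff.mp (Eventually.of_forall fun n => ⟨f n t, rfl⟩)
  choose g hg using hlim
  exact ⟨g, fun s => ((eventually_all_finset s).mpr fun t _ => hg t).frequently.filter_mono
    (Ultrafilter.of_le _)⟩

def blocks (x : ℤ → α) (p : ℕ) : ℤ → Fin p → α := fun m l => x (m * p + l)

def residueFactorSet (x : ℤ → α) (p : ℕ) (r : ZMod p) (n : ℕ) : Set (Fin n → α) :=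
  window x n '' {i | (i : ZMod p) = r}

section Residues

variable {x : ℤ → α} {p : ℕ} {a : α} {A : Finset (ZMod p)}

lemma periodic_of_periodic_blocks {N : ℕ} (hp : 0 < p) (h : Periodic (blocks x p) N) :
    Periodic x (N * p : ℕ) := by
  intro t
  have hr := Int.emod_nonneg t (by omega : (p : ℤ) ≠ 0)
  have hrp := Int.emod_lt_of_pos t (by omega : (0 : ℤ) < p)
  have := congrFun (h (t / p)) ⟨(t % p).toNat, by omega⟩
  simp only [blocks, Int.toNat_of_nonneg hr] at this
  rw [add_mul, add_right_comm, Int.ediv_mul_add_emod] at this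
  simpa [mul_comm] using this

lemma not_periodic_blocks [Finite α] (hx : ∀ n, (factorSet x n).ncard = n + 1) {N : ℕ}
    (hp : 0 < p) (hN : 0 < N) : ¬ Periodic (blocks x p) N := fun h =>
  not_periodic_of_ncard_factorSet_eq hx (Nat.mul_pos hN hp) (periodic_of_periodic_blocks hp h)

lemma residueFactorSet_subset (r : ZMod p) (n : ℕ) : residueFactorSet x p r n ⊆ factorSet x n :=
  image_subset_range _ _

/-- The window of length `n` starting at `i * p + 1 - o` contains all positions of the blocks
`i, …, i + K - 1` except the multiples of `p`, where `x` is known to be `a`. -/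
lemma ncard_factorSet_blocks_le [Finite α] (h0 : ∀ t : ℤ, (t : ZMod p) = 0 → x t = a)
    {K n o : ℕ} (hK : K * p + o ≤ n + 1) :
    (factorSet (blocks x p) K).ncard ≤ (residueFactorSet x p (1 - o) n).ncard := by
  calc (factorSet (blocks x p) K).ncard
      ≤ (range fun i : ℤ => window x n (i * p + 1 - o)).ncard := by
        refine ncard_range_le_of_factorsThrough fun i i' h => funext fun j => funext fun l => ?_
        show x ((i + j) * p + l) = x ((i' + j) * p + l)
        rcases Nat.eq_zero_or_pos l with hl | hl
        · rw [h0 _ (by simp [hl]), h0 _ (by simp [hl])]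
        · have hj : (j + 1 : ℤ) * p ≤ K * p := by
            exact_mod_cast Nat.mul_le_mul_right p j.isLt
          have hl1 : (1 : ℤ) ≤ l := by exact_mod_cast hl
          have hjp : (0 : ℤ) ≤ j * p := by positivity
          have := apply_eq_of_window_eq h (q := j * p + l + o - 1) (by linarith)
            (by linarith [l.isLt])
          convert this using 2 <;> ring
    _ ≤ (residueFactorSet x p (1 - o) n).ncard := by
        refine ncard_le_ncard (range_subset_iff.2 fun i => ⟨_, ?_, rfl⟩) (toFinite _)
        simp

lemma le_ncard_residueFactorSet [Finite α] [NeZero p] (hx : ∀ n, (factorSet x n).ncard = n + 1)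
    (h0 : ∀ t : ℤ, (t : ZMod p) = 0 → x t = a) {m n : ℕ} (hn : n + 1 = (m + 1) * p)
    (r : ZMod p) : m + 1 + (if r = 1 then 1 else 0) ≤ (residueFactorSet x p r n).ncard := by
  have hp : 0 < p := Nat.pos_of_neZero p
  have hblocks := succ_le_ncard_factorSet_of_aperiodic fun N hN => not_periodic_blocks hx hp hN
  split_ifs with hr
  · subst hr
    simpa using (hblocks (m + 1)).trans
      (ncard_factorSet_blocks_le h0 (K := m + 1) (o := 0) (by omega))
  · have hcls : 1 - (((1 - r).val : ℕ) : ZMod p) = r := by simp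
    have ho : m * p + (1 - r).val ≤ n + 1 := by
      have := ZMod.val_lt (1 - r)
      rw [hn, add_one_mul]
      omega
    simpa [hcls] using (hblocks m).trans (ncard_factorSet_blocks_le h0 ho)

lemma exists_not_disjoint_residueFactorSet [Finite α] [NeZero p]
    (hx : ∀ n, (factorSet x n).ncard = n + 1) (h0 : ∀ t : ℤ, (t : ZMod p) = 0 → x t = a)
    {m n : ℕ} (hn : n + 1 = (m + 1) * p) :
    ∃ r s : ZMod p, r ≠ s ∧ ¬ Disjoint (residueFactorSet x p r n) (residueFactorSet x p s n) := by
  by_contra! hdisj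
  have hsum : n + 2 ≤ ∑ r : ZMod p, (residueFactorSet x p r n).ncard :=
    calc n + 2 = ∑ r : ZMod p, (m + 1 + if r = 1 then 1 else 0) := by
          simp only [Finset.sum_add_distrib, Finset.sum_const, Finset.card_univ, ZMod.card,
            smul_eq_mul, Finset.sum_ite_eq', Finset.mem_univ, if_true]
          linarith
      _ ≤ _ := Finset.sum_le_sum fun r _ => le_ncard_residueFactorSet hx h0 hn r
  have hunion : (⋃ r, residueFactorSet x p r n).ncard ≤ n + 1 :=
    hx n ▸ ncard_le_ncard (iUnion_subset fun r => residueFactorSet_subset r n) (toFinite _)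
  rw [ncard_iUnion_of_finite (fun _ => toFinite _) hdisj, finsum_eq_sum_of_fintype] at hunion
  omega

lemma exists_window_of_not_disjoint (hA : ∀ t : ℤ, (t : ZMod p) ∈ A → x t = a) {n : ℕ}
    {r s : ZMod p} (h : ¬ Disjoint (residueFactorSet x p r n) (residueFactorSet x p s n)) :
    ∃ i : ℤ, ∀ t, i ≤ t → t < i + n → (t : ZMod p) ∈ A ∪ A.image (· + (r - s)) → x t = a := by
  obtain ⟨_, ⟨i, hi, rfl⟩, ⟨j, hj, hij⟩⟩ := not_disjoint_iff.mp h
  refine ⟨i, fun t hit hti ht => ?_⟩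
  rcases Finset.mem_union.mp ht with ht | ht
  · exact hA t ht
  · obtain ⟨b, hb, hbt⟩ := Finset.mem_image.mp ht
    have := apply_eq_of_window_eq hij (q := t - i) (by omega) (by omega)
    rw [add_sub_cancel] at this
    rw [← this]
    refine hA _ ?_
    simp only [mem_ofPred_eq] at hi hj
    push_cast
    rw [hi, hj, ← hbt]
    convert hb using 1
    ring

lemma exists_translate_windows [Finite α] [NeZero p] (hx : ∀ n, (factorSet x n).ncard = n + 1)
    (hA : ∀ t : ℤ, (t : ZMod p) ∈ A → x t = a) (h0A : 0 ∈ A) (hp : 1 < p) :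
    ∃ d ≠ 0, ∀ N : ℕ, ∃ i : ℤ,
      ∀ t, i ≤ t → t < i + N → (t : ZMod p) ∈ A ∪ A.image (· + d) → x t = a := by
  have h0 : ∀ t : ℤ, (t : ZMod p) = 0 → x t = a := fun t ht => hA t (ht ▸ h0A)
  have key : ∀ m : ℕ, ∃ d ≠ (0 : ZMod p), ∃ i : ℤ, ∀ t, i ≤ t → t < i + ((m + 1) * p - 1 : ℕ) →
      (t : ZMod p) ∈ A ∪ A.image (· + d) → x t = a := fun m => by
    obtain ⟨r, s, hrs, h⟩ := exists_not_disjoint_residueFactorSet hx h0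
      (m := m) (n := (m + 1) * p - 1) (Nat.sub_add_cancel (Nat.mul_pos m.succ_pos (by omega)))
    exact ⟨r - s, sub_ne_zero.mpr hrs, exists_window_of_not_disjoint hA h⟩
  choose d hd i hi using key
  obtain ⟨d₀, hd₀⟩ := Finite.exists_infinite_fiber d
  have hfiber := Set.infinite_coe_iff.mp hd₀
  obtain ⟨m₀, hm₀⟩ := hfiber.nonempty
  refine ⟨d₀, hm₀ ▸ hd m₀, fun N => ?_⟩
  obtain ⟨m, hm, hNm⟩ := hfiber.exists_gt N
  have : (m + 1) * 2 ≤ (m + 1) * p := Nat.mul_le_mul_left _ hp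
  exact ⟨i m, fun t hit hti ht => hi m t hit (by omega) (hm ▸ ht)⟩

lemma exists_intCast_eq_zero_mem_Ico [NeZero p] (i : ℤ) :
    ∃ c : ℤ, (c : ZMod p) = 0 ∧ i ≤ c ∧ c < i + p := by
  have hp : (0 : ℤ) < p := by exact_mod_cast Nat.pos_of_neZero p
  refine ⟨i + (-i) % p, by push_cast [ZMod.intCast_mod]; ring, ?_, ?_⟩
  · linarith [Int.emod_nonneg (-i) hp.ne']
  · linarith [Int.emod_lt_of_pos (-i) hp]

lemma exists_limit_of_windows [Finite α] [NeZero p] {y : ℤ → α}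
    (h : ∀ N : ℕ, ∃ i : ℤ, (∀ t : ℤ, i ≤ t → t < i + N → (t : ZMod p) ∈ A → x t = a) ∧
      ∀ (m : ℕ) (j : ℤ), i ≤ j → j + m ≤ i + N → window x m j ∈ factorSet y m) :
    ∃ x' : ℤ → α, (∀ m, factorSet x' m ⊆ factorSet y m) ∧
      ∀ t : ℤ, (t : ZMod p) ∈ A → x' t = a := by
  have hcenter : ∀ N : ℕ, ∃ c : ℤ,
      (∀ t : ℤ, -N ≤ t → t < N → (t : ZMod p) ∈ A → x (c + t) = a) ∧
      ∀ (m : ℕ) (j : ℤ), -N ≤ j → j + m ≤ N → window x m (c + j) ∈ factorSet y m := by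
    intro N
    obtain ⟨i, hA, hL⟩ := h (2 * N + p)
    obtain ⟨c, hc0, hic, hci⟩ := exists_intCast_eq_zero_mem_Ico (p := p) (i + N)
    refine ⟨c, fun t h1 h2 ht => hA _ (by omega) (by push_cast; omega) ?_,
      fun m j h1 h2 => hL m (c + j) (by omega) (by push_cast; omega)⟩
    push_cast
    rwa [hc0, zero_add]
  choose c hcA hcL using hcenter
  obtain ⟨g, hg⟩ := exists_frequently_eqOn_finset fun N t => x (c N + t)
  refine ⟨g, fun m => ?_, fun t ht => ?_⟩
  · rintro _ ⟨j, rfl⟩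
    obtain ⟨N, hagree, hN⟩ :=
      ((hg (Finset.Ico j (j + m))).and_eventually (eventually_ge_atTop (j.natAbs + m))).exists
    have hwin : window g m j = window x m (c N + j) := funext fun t => by
      simp only [window, add_assoc]
      exact (hagree _ (by simp)).symm
    rw [hwin]
    exact hcL N m j (by omega) (by omega)
  · obtain ⟨N, hagree, hN⟩ :=
      ((hg {t}).and_eventually (eventually_gt_atTop t.natAbs)).exists
    rw [← hagree t (Finset.mem_singleton_self t)]
    exact hcA N t (by omega) (by omega) ht

lemma intCast_mem_of_image_add_subset [NeZero p] {d : ZMod p} (h0A : 0 ∈ A)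
    (hAd : A.image (· + d) ⊆ A) {t : ℤ} (ht : ((d.val.gcd p : ℕ) : ℤ) ∣ t) :
    (t : ZMod p) ∈ A := by
  have hmul : ∀ n : ℕ, n • d ∈ A := by
    intro n
    induction n with
    | zero => simpa using h0A
    | succ n ih => exact succ_nsmul d n ▸ hAd (Finset.mem_image_of_mem _ ih)
  have hz : (t : ZMod p) ∈ AddSubgroup.zmultiples d := by
    obtain ⟨k, rfl⟩ := ht
    refine ⟨Nat.gcdA d.val p * k, ?_⟩
    rw [Nat.gcd_eq_gcd_ab]
    push_cast [zsmul_eq_mul]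
    simp only [ZMod.natCast_val, ZMod.cast_id', id_eq, CharP.cast_eq_zero, zero_mul, add_zero]
    ring
  obtain ⟨n, hn⟩ := mem_multiples_iff_mem_zmultiples.mpr hz
  exact hn ▸ hmul n

end Residues

theorem not_eqOn_residues_of_factorSet_subset [Finite α] {y : ℤ → α} (hy : UniformlyRecurrent y)
    (hyc : ∀ n, (factorSet y n).ncard = n + 1) (p : ℕ) (hp : 0 < p) (A : Finset (ZMod p))
    (h0A : 0 ∈ A) (x : ℤ → α) (hxy : ∀ m, factorSet x m ⊆ factorSet y m) (a : α) :
    ¬ ∀ t : ℤ, (t : ZMod p) ∈ A → x t = a := by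
  induction p using Nat.strong_induction_on generalizing x with
  | _ p IHp =>
  have : NeZero p := ⟨hp.ne'⟩
  refine Finset.strongDownwardInduction (n := p) (p := fun A => 0 ∈ A → ∀ x : ℤ → α,
    (∀ m, factorSet x m ⊆ factorSet y m) → ¬ ∀ t : ℤ, (t : ZMod p) ∈ A → x t = a)
    (fun A IHA _ h0A x hxy hA => ?_) A ((Finset.card_le_univ _).trans_eq (ZMod.card p)) h0A x hxy
  have hx n : (factorSet x n).ncard = n + 1 :=
    factorSet_eq_of_subset_of_uniformlyRecurrent hy hxy n ▸ hyc n
  obtain rfl | hp1 : p = 1 ∨ 1 < p := by omega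
  · have hA1 (t : ℤ) : (t : ZMod 1) ∈ A := Subsingleton.elim (0 : ZMod 1) (t : ZMod 1) ▸ h0A
    exact not_periodic_of_ncard_factorSet_eq hx one_pos fun t => by
      rw [hA _ (hA1 _), hA _ (hA1 _)]
  obtain ⟨d, hd, hwin⟩ := exists_translate_windows hx hA h0A hp1
  by_cases hAd : A.image (· + d) ⊆ A
  · have hg : d.val.gcd p < p :=
      (Nat.gcd_le_left _ (Nat.pos_of_ne_zero ((ZMod.val_ne_zero d).mpr hd))).trans_lt d.val_lt
    refine IHp _ hg (Nat.gcd_pos_of_pos_right _ hp) {0} (by simp) x hxy fun t ht => ?_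
    refine hA t (intCast_mem_of_image_add_subset h0A hAd ?_)
    exact (ZMod.intCast_zmod_eq_zero_iff_dvd t _).mp (by simpa using ht)
  · obtain ⟨x', hx'y, hx'A⟩ := exists_limit_of_windows (y := y) fun N => by
      obtain ⟨i, hi⟩ := hwin N
      exact ⟨i, hi, fun m j _ _ => hxy m (mem_range_self j)⟩
    exact IHA ((Finset.card_le_univ _).trans_eq (ZMod.card p))
      ⟨Finset.subset_union_left, fun h => hAd (Finset.subset_union_right.trans h)⟩
      (Finset.mem_union_left _ h0A) x' hx'y hx'A

lemma exists_le_length_of_infinite [Finite α] {S : Set (List α)} (hS : S.Infinite) (N : ℕ) :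
    ∃ w ∈ S, N ≤ w.length := by
  by_contra! hshort
  exact hS ((List.finite_length_lt (α := α) (n := N)).subset fun w hw => hshort w hw)

lemma exists_window_mem_factorSet_of_isFactor {w : List α} {y z : ℤ → α} (hy : IsFactor w y)
    (hz : IsFactor w z) : ∃ i : ℤ,
      ∀ (m : ℕ) (j : ℤ), i ≤ j → j + m ≤ i + w.length → window z m j ∈ factorSet y m := by
  obtain ⟨iy, hwy⟩ := hy
  obtain ⟨iz, hwz⟩ := hz
  have hyz : window y w.length iy = window z w.length iz :=
    funext fun t => (hwy t).trans (hwz t).symm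
  refine ⟨iz, fun m j hj hjm => ⟨iy + (j - iz), funext fun s => ?_⟩⟩
  have := apply_eq_of_window_eq hyz (q := j - iz + s) (by omega) (by omega)
  simp only [window]
  convert this using 2 <;> ring

end

/-- A sturmian sequence and a Toeplitz sequence have only finitely many factors in
common. -/
theorem sturmian_toeplitz_finite_common_factors
    {B : Type*} [Fintype B]
    (y : ℤ → B) (hy : IsSturmian y)
    (z : ℤ → B) (hz : IsToeplitz z) :
    {w : List B | IsFactor w y ∧ IsFactor w z}.Finite := by
  by_contra hinf
  obtain ⟨p, hp, hzp⟩ := hz 0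
  have : NeZero p := ⟨by omega⟩
  have hz0 (t : ℤ) (ht : (t : ZMod p) ∈ ({0} : Finset (ZMod p))) : z t = z 0 := by
    obtain ⟨k, rfl⟩ := (ZMod.intCast_zmod_eq_zero_iff_dvd t p).mp (by simpa using ht)
    simpa [mul_comm] using hzp k
  obtain ⟨x, hxy, hxa⟩ := exists_limit_of_windows (y := y) fun N => by
    obtain ⟨w, ⟨hwy, hwz⟩, hN⟩ := exists_le_length_of_infinite hinf N
    obtain ⟨i, hi⟩ := exists_window_mem_factorSet_of_isFactor hwy hwz
    exact ⟨i, fun t _ _ => hz0 t, fun m j hij hjm => hi m j hij (by omega)⟩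
  have hyc n : (factorSet y n).ncard = n + 1 := complexity_eq_ncard_factorSet y n ▸ hy.2 n
  exact not_eqOn_residues_of_factorSet_subset hy.1 hyc p (by omega) {0} (by simp) x hxy (z 0) hxa
end
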